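/- Every block-cyclic permutation avoids the pattern 321, and every positive integer power of a block-cyclic permutation is block-cyclic; hence all powers of a block-cyclic permutation avoid 321. -/
import Mathlib


/-- A permutation of length n is block-cyclic if {0,…,n-1} splits into consecutive
intervals (given by cut points `s 0 = 0 < s 1 < ⋯ < s t = n`), each mapped to itself by
`p`, and on each block `p` acts as a (cyclic) shift by `d`, where `d = 0` for singleton
blocks (identity) and `1 ≤ d < k` for blocks of size `k ≥ 2` (a nontrivial power of the
full cycle on the block). -/
def IsBlockCyclic {n : ℕ} (p : Equiv.Perm (Fin n)) : Prop :=
  ∃ (t : ℕ) (s : ℕ → ℕ), s 0 = 0 ∧ s t = n ∧ (∀ b, b < t → s b < s (b + 1)) ∧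
    ∀ b, b < t → ∃ d : ℕ, d < s (b + 1) - s b ∧ (2 ≤ s (b + 1) - s b → 1 ≤ d) ∧
      ∀ j, s b + j < s (b + 1) → ∀ h : s b + j < n,
        (p ⟨s b + j, h⟩ : ℕ) = s b + (j + d) % (s (b + 1) - s b)

/-- `p` avoids 321: no decreasing subsequence of length 3. -/
def Avoids321 {n : ℕ} (p : Equiv.Perm (Fin n)) : Prop :=
  ¬ ∃ a b c : Fin n, a < b ∧ b < c ∧ p c < p b ∧ p b < p a

namespace BC321

variable {n : ℕ}

/-- Weak version: shifts may be trivial on non-singleton blocks. -/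
def WeakBC (p : Equiv.Perm (Fin n)) : Prop :=
  ∃ (t : ℕ) (s : ℕ → ℕ), s 0 = 0 ∧ s t = n ∧ (∀ b, b < t → s b < s (b + 1)) ∧
    ∀ b, b < t → ∃ d : ℕ, d < s (b + 1) - s b ∧
      ∀ j, s b + j < s (b + 1) → ∀ h : s b + j < n,
        (p ⟨s b + j, h⟩ : ℕ) = s b + (j + d) % (s (b + 1) - s b)

lemma s_le {s : ℕ → ℕ} {t : ℕ} (hm : ∀ b, b < t → s b < s (b + 1)) :
    ∀ {i j : ℕ}, i ≤ j → j ≤ t → s i ≤ s j := by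
  intro i j hij
  induction hij with
  | refl => intro _; exact le_refl _
  | @step j hj ih =>
      intro hjt
      exact le_trans (ih (by omega)) (le_of_lt (hm j (by omega)))

lemma s_lt {s : ℕ → ℕ} {t : ℕ} (hm : ∀ b, b < t → s b < s (b + 1)) :
    ∀ {i j : ℕ}, i < j → j ≤ t → s i < s j := by
  intro i j hij hjt
  obtain ⟨j, rfl⟩ : ∃ j', j = j' + 1 := ⟨j - 1, by omega⟩
  exact lt_of_le_of_lt (s_le hm (by omega) (by omega)) (hm j (by omega))

lemma exists_block {s : ℕ → ℕ} {t : ℕ} (h0 : s 0 = 0)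
    (hm : ∀ b, b < t → s b < s (b + 1)) :
    ∀ x, x < s t → ∃ b, b < t ∧ s b ≤ x ∧ x < s (b + 1) := by
  induction t with
  | zero => intro x hx; omega
  | succ t ih =>
      intro x hx
      by_cases hc : s t ≤ x
      · exact ⟨t, by omega, hc, hx⟩
      · obtain ⟨b, hb, h1, h2⟩ := ih (fun b hb => hm b (by omega)) x (by omega)
        exact ⟨b, by omega, h1, h2⟩

lemma mod_cases {d k : ℕ} (hd : d < k) : ∀ z, z < k →
    ((z + d) % k = z + d ∧ z + d < k) ∨ ((z + d) % k = z + d - k ∧ k ≤ z + d) := by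
  intro z hz
  by_cases hc : z + d < k
  · exact Or.inl ⟨Nat.mod_eq_of_lt hc, hc⟩
  · right
    rw [Nat.mod_eq_sub_mod (by omega), Nat.mod_eq_of_lt (by omega)]
    omega

lemma weak_avoids {p : Equiv.Perm (Fin n)} (h : WeakBC p) : Avoids321 p := by
  obtain ⟨t, s, h0, hn, hm, hblk⟩ := h
  rintro ⟨a, b, c, hab, hbc, h1, h2⟩
  have hab' : (a : ℕ) < b := hab
  have hbc' : (b : ℕ) < c := hbc
  have h1' : ((p c : Fin n) : ℕ) < (p b : Fin n) := h1
  have h2' : ((p b : Fin n) : ℕ) < (p a : Fin n) := h2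
  have hb : ∀ x : Fin n, ∃ B, B < t ∧ s B ≤ x.val ∧ x.val < s (B + 1) := by
    intro x
    exact exists_block h0 hm x.val (by rw [hn]; exact x.isLt)
  have himg : ∀ B, B < t → ∀ x : Fin n, s B ≤ x.val → x.val < s (B + 1) →
      s B ≤ (p x).val ∧ (p x).val < s (B + 1) := by
    intro B hB x hx1 hx2
    obtain ⟨d, hd, hf⟩ := hblk B hB
    have hjlt : s B + (x.val - s B) < s (B + 1) := by omega
    have hv := hf (x.val - s B) hjlt (by omega)
    have hx : (⟨s B + (x.val - s B), by omega⟩ : Fin n) = x := Fin.ext (by simp; omega)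
    rw [hx] at hv
    have hk : (x.val - s B + d) % (s (B + 1) - s B) < s (B + 1) - s B :=
      Nat.mod_lt _ (by omega)
    omega
  obtain ⟨A, hA, hA1, hA2⟩ := hb a
  obtain ⟨B, hB, hB1, hB2⟩ := hb b
  obtain ⟨C, hC, hC1, hC2⟩ := hb c
  have hia := himg A hA a hA1 hA2
  have hib := himg B hB b hB1 hB2
  have hic := himg C hC c hC1 hC2
  have hAB : A = B := by
    rcases lt_trichotomy A B with hlt | heq | hgt
    · have : s (A + 1) ≤ s B := s_le hm (by omega) (by omega)
      omega
    · exact heq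
    · have : s (B + 1) ≤ s A := s_le hm (by omega) (by omega)
      omega
  have hBC : B = C := by
    rcases lt_trichotomy B C with hlt | heq | hgt
    · have : s (B + 1) ≤ s C := s_le hm (by omega) (by omega)
      omega
    · exact heq
    · have : s (C + 1) ≤ s B := s_le hm (by omega) (by omega)
      omega
  subst hAB; subst hBC
  obtain ⟨d, hd, hf⟩ := hblk A hA
  have hval : ∀ x : Fin n, s A ≤ x.val → x.val < s (A + 1) →
      (p x).val = s A + ((x.val - s A) + d) % (s (A + 1) - s A) := by
    intro x hx1 hx2
    have hjlt : s A + (x.val - s A) < s (A + 1) := by omega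
    have hv := hf (x.val - s A) hjlt (by omega)
    have hx : (⟨s A + (x.val - s A), by omega⟩ : Fin n) = x := Fin.ext (by simp; omega)
    rw [hx] at hv
    exact hv
  have hva := hval a hA1 hA2
  have hvb := hval b hB1 hB2
  have hvc := hval c hC1 hC2
  rcases mod_cases hd (a.val - s A) (by omega) with ⟨ha1, ha2⟩ | ⟨ha1, ha2⟩ <;>
    rcases mod_cases hd (b.val - s A) (by omega) with ⟨hb1, hb2⟩ | ⟨hb1, hb2⟩ <;>
      rcases mod_cases hd (c.val - s A) (by omega) with ⟨hc1, hc2⟩ | ⟨hc1, hc2⟩ <;>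
        omega

lemma is_pow_weak {p : Equiv.Perm (Fin n)} (h : IsBlockCyclic p) (m : ℕ) :
    WeakBC (p ^ m) := by
  obtain ⟨t, s, h0, hn, hm, hblk⟩ := h
  refine ⟨t, s, h0, hn, hm, ?_⟩
  intro b hb
  obtain ⟨d, hd, _, hf⟩ := hblk b hb
  have hk : 0 < s (b + 1) - s b := by have := hm b hb; omega
  have hsn : s (b + 1) ≤ n := by rw [← hn]; exact s_le hm (by omega) (le_refl t)
  have key : ∀ M : ℕ, ∀ j, s b + j < s (b + 1) → ∀ h : s b + j < n,
      ((p ^ M) ⟨s b + j, h⟩ : ℕ) = s b + (j + M * d) % (s (b + 1) - s b) := by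
    intro M
    induction M with
    | zero =>
        intro j hj hjn
        have h1 : (j + 0 * d) % (s (b + 1) - s b) = j := by
          rw [Nat.zero_mul, Nat.add_zero, Nat.mod_eq_of_lt (by omega)]
        rw [pow_zero, h1]
        simp
    | succ M ih =>
        intro j hj hjn
        have hjm : (j + M * d) % (s (b + 1) - s b) < s (b + 1) - s b := Nat.mod_lt _ hk
        have h2 : s b + (j + M * d) % (s (b + 1) - s b) < n := by omega
        have hstep := hf ((j + M * d) % (s (b + 1) - s b)) (by omega) h2
        have hy : (p ^ M) ⟨s b + j, hjn⟩ =
            ⟨s b + (j + M * d) % (s (b + 1) - s b), h2⟩ := Fin.ext (ih j hj hjn)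
        have harith : j + M * d + d = j + (M + 1) * d := by ring
        rw [pow_succ', Equiv.Perm.mul_apply, hy, hstep, Nat.mod_add_mod, harith]
  refine ⟨(m * d) % (s (b + 1) - s b), Nat.mod_lt _ hk, ?_⟩
  intro j hj hjn
  rw [key m j hj hjn, Nat.add_mod_mod]

open Classical in
/-- The least element `y` with `x < y ≤ N` satisfying `P` (or `x` if none exists). -/
noncomputable def nextCut (P : ℕ → Prop) (N x : ℕ) : ℕ :=
  if h : ∃ y, x < y ∧ y ≤ N ∧ P y then Nat.find h else x

open Classical in
lemma nextCut_spec (P : ℕ → Prop) (N x : ℕ) (hex : ∃ y, x < y ∧ y ≤ N ∧ P y) :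
    x < nextCut P N x ∧ nextCut P N x ≤ N ∧ P (nextCut P N x) ∧
      ∀ y, x < y → y < nextCut P N x → ¬ P y := by
  unfold nextCut
  rw [dif_pos hex]
  obtain ⟨hh1, hh2, hh3⟩ := Nat.find_spec hex
  refine ⟨hh1, hh2, hh3, ?_⟩
  intro y hy1 hy2 hy3
  exact Nat.find_min hex hy2 ⟨hy1, by omega, hy3⟩

open Classical in
lemma nextCut_eq_self (P : ℕ → Prop) (N x : ℕ) (h : ¬ ∃ y, x < y ∧ y ≤ N ∧ P y) :
    nextCut P N x = x :=
  dif_neg h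

lemma weak_to_is {p : Equiv.Perm (Fin n)} (h : WeakBC p) : IsBlockCyclic p := by
  classical
  obtain ⟨t, s, h0, hn, hm, hblk⟩ := h
  set P : ℕ → Prop := fun x => (∃ b, b ≤ t ∧ s b = x) ∨ ∃ hx : x < n, p ⟨x, hx⟩ = ⟨x, hx⟩
    with hPdef
  have hP0 : P 0 := Or.inl ⟨0, by omega, h0⟩
  have hPn : P n := Or.inl ⟨t, le_refl t, hn⟩
  have hstep : ∀ x, x < n → x < nextCut P n x ∧ nextCut P n x ≤ n ∧ P (nextCut P n x) ∧
      ∀ y, x < y → y < nextCut P n x → ¬ P y := by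
    intro x hx
    exact nextCut_spec P n x ⟨n, hx, le_refl n, hPn⟩
  have hfix : nextCut P n n = n := by
    apply nextCut_eq_self
    rintro ⟨y, hy1, hy2, -⟩
    omega
  set s' : ℕ → ℕ := fun i => (nextCut P n)^[i] 0 with hs'def
  have hs'0 : s' 0 = 0 := rfl
  have hs'succ : ∀ i, s' (i + 1) = nextCut P n (s' i) := by
    intro i
    simp only [hs'def, Function.iterate_succ_apply']
  have hboth : ∀ i, s' i ≤ n ∧ P (s' i) := by
    intro i
    induction i with
    | zero => exact ⟨Nat.zero_le n, by rw [hs'0]; exact hP0⟩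
    | succ i ih =>
        rcases lt_or_eq_of_le ih.1 with hlt | heq
        · have := hstep (s' i) hlt
          rw [hs'succ]
          exact ⟨this.2.1, this.2.2.1⟩
        · rw [hs'succ, heq, hfix]
          exact ⟨le_refl n, hPn⟩
  have hge : ∀ i, s' i = n ∨ i ≤ s' i := by
    intro i
    induction i with
    | zero => exact Or.inr (Nat.zero_le _)
    | succ i ih =>
        rcases ih with hi | hi
        · left; rw [hs'succ, hi, hfix]
        · rcases lt_or_eq_of_le (hboth i).1 with hlt | heq
          · right
            have := (hstep (s' i) hlt).1
            rw [hs'succ]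
            omega
          · left; rw [hs'succ, heq, hfix]
  have hreach : ∃ i, s' i = n := by
    rcases hge n with hi | hi
    · exact ⟨n, hi⟩
    · exact ⟨n, le_antisymm (hboth n).1 hi⟩
  refine ⟨Nat.find hreach, s', hs'0, Nat.find_spec hreach, ?_, ?_⟩
  · intro b hb
    have hne : s' b ≠ n := Nat.find_min hreach hb
    have hlt : s' b < n := lt_of_le_of_ne (hboth b).1 hne
    rw [hs'succ]
    exact (hstep (s' b) hlt).1
  · intro b hb
    have hne : s' b ≠ n := Nat.find_min hreach hb
    have hcn : s' b < n := lt_of_le_of_ne (hboth b).1 hne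
    obtain ⟨hlt, hle, hPc', hmin⟩ := hstep (s' b) hcn
    rw [hs'succ b]
    set c := s' b with hc
    set c' := nextCut P n (s' b) with hc'
    have hPc : P c := (hboth b).2
    -- locate the original block containing c
    obtain ⟨B, hB, hB1, hB2⟩ := exists_block h0 hm c (by omega)
    obtain ⟨d, hd, hf⟩ := hblk B hB
    have hsB1n : s (B + 1) ≤ n := by rw [← hn]; exact s_le hm (by omega) (le_refl t)
    have hval : ∀ x (hx : x < n), s B ≤ x → x < s (B + 1) →
        (p ⟨x, hx⟩ : ℕ) = s B + ((x - s B) + d) % (s (B + 1) - s B) := by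
      intro x hx h1 h2
      have h3 := hf (x - s B) (by omega) (by omega)
      have h4 : (⟨s B + (x - s B), by omega⟩ : Fin n) = ⟨x, hx⟩ := Fin.ext (by simp; omega)
      rwa [h4] at h3
    have hc'le : c' ≤ s (B + 1) := by
      by_contra hcc
      exact hmin (s (B + 1)) (by omega) (by omega) (Or.inl ⟨B + 1, by omega, rfl⟩)
    by_cases hd0 : d = 0
    · -- identity on block B; the refined block is a singleton
      have hcfix : ∀ x (hx : x < n), s B ≤ x → x < s (B + 1) → p ⟨x, hx⟩ = ⟨x, hx⟩ := by
        intro x hx h1 h2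
        apply Fin.ext
        rw [hval x hx h1 h2, hd0, Nat.add_zero, Nat.mod_eq_of_lt (by omega)]
        simp
        omega
      have hc'1 : c' = c + 1 := by
        by_contra hcc
        have h1 : c + 1 < c' := by omega
        refine hmin (c + 1) (by omega) h1 (Or.inr ⟨by omega, ?_⟩)
        exact hcfix (c + 1) (by omega) (by omega) (by omega)
      refine ⟨0, by omega, by omega, ?_⟩
      intro j hj hjn
      have hj0 : j = 0 := by omega
      subst hj0
      have hfx := hcfix (c + 0) hjn (by omega) (by omega)
      rw [hfx]
      simp [hc'1]
    · -- nontrivial shift on block B; the refined block equals B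
      have hd1 : 1 ≤ d := by omega
      have hnofix : ∀ x (hx : x < n), s B ≤ x → x < s (B + 1) → p ⟨x, hx⟩ ≠ ⟨x, hx⟩ := by
        intro x hx h1 h2 heq
        have h3 := hval x hx h1 h2
        rw [heq] at h3
        simp at h3
        rcases mod_cases hd (x - s B) (by omega) with ⟨he, he2⟩ | ⟨he, he2⟩ <;> omega
      have hconly : ∀ x, s B ≤ x → x < s (B + 1) → P x → x = s B := by
        intro x h1 h2 hPx
        rcases hPx with ⟨b', hb', rfl⟩ | ⟨hx, hfx⟩
        · rcases lt_trichotomy b' B with hlt | heq | hgt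
          · have := s_lt hm hlt (by omega)
            omega
          · rw [heq]
          · have : s (B + 1) ≤ s b' := s_le hm (by omega) hb'
            omega
        · exact absurd hfx (hnofix x hx h1 h2)
      have hceq : c = s B := hconly c hB1 hB2 hPc
      have hc'eq : c' = s (B + 1) := by
        rcases eq_or_lt_of_le hc'le with heq | hlt2
        · exact heq
        · have := hconly c' (by omega) hlt2 hPc'
          omega
      refine ⟨d, by omega, fun _ => hd1, ?_⟩
      intro j hj hjn
      have h4 : (⟨c + j, hjn⟩ : Fin n) = ⟨s B + j, by omega⟩ := Fin.mk_eq_mk.mpr (by omega)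
      rw [h4, hf j (by omega) (by omega), hceq, hc'eq]
  
end BC321

theorem blockCyclic_powers_avoid_321 {n : ℕ} (p : Equiv.Perm (Fin n))
    (h : IsBlockCyclic p) :
    Avoids321 p ∧ ∀ m : ℕ, 1 ≤ m → IsBlockCyclic (p ^ m) ∧ Avoids321 (p ^ m) := by
  have hw : BC321.WeakBC p := by
    obtain ⟨t, s, h0, hn, hm, hblk⟩ := h
    exact ⟨t, s, h0, hn, hm, fun b hb => (hblk b hb).imp fun d hd => ⟨hd.1, hd.2.2⟩⟩
  refine ⟨BC321.weak_avoids hw, fun m _ => ?_⟩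
  have hwm := BC321.is_pow_weak h m
  exact ⟨BC321.weak_to_is hwm, BC321.weak_avoids hwm⟩
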